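/- Let m > 1 be an odd integer. Then the class number of the imaginary quadratic field ℚ(√(1 - 2m³)) is divisible by 3. -/

import Mathlib

/-!
Put `d = 1 - 2m³` and `β = 1 - m³ + √d`. Then `β β̄ = m⁶` and `β + β̄ = 2(1 - m³)` is coprime to
`m²`, which forces `(m², β)³ = (β)`; so the class of `𝔞 = (m², β)` has order dividing `3`.
If `𝔞 = (γ)` were principal, `γ³ = εβ` for a unit `ε`. Since `d v² ≠ -3`, the field is not
`ℚ(√-3)`, all units are cubes, and `β` itself would be a cube `γ³`. Then `N γ = m²` and the
trace `t` of `γ` satisfies `t³ - 3m²t = tr β = 2 - 2m³`, i.e. `(t - m)²(t + 2m) = 2`, which has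
no solution for `m ≠ 1`.
-/

open NumberField
open scoped nonZeroDivisors

namespace Ideal

variable {R : Type*} [CommSemiring R]

theorem sup_pow_le_pow_sup (I J : Ideal R) (n : ℕ) : (I ⊔ J) ^ n ≤ I ^ n ⊔ J := by
  induction n with
  | zero => simp
  | succ n ih =>
    calc (I ⊔ J) ^ (n + 1) = (I ⊔ J) ^ n * (I ⊔ J) := pow_succ _ _
      _ ≤ (I ^ n ⊔ J) * (I ⊔ J) := mul_mono_left ih
      _ = I ^ (n + 1) ⊔ (I ^ n * J ⊔ (J * I ⊔ J * J)) := by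
        rw [sup_mul, mul_sup, mul_sup, pow_succ, sup_assoc]
      _ ≤ I ^ (n + 1) ⊔ J :=
        sup_le_sup_left (sup_le mul_le_right (sup_le mul_le_left mul_le_left)) _

theorem sup_pow_eq_of_mul_eq_pow {A A' C : Ideal R} {k : ℕ} (hAA' : A * A' = C ^ k)
    (hcop : C ⊔ A ⊔ A' = ⊤) : (C ⊔ A) ^ k = A := by
  apply le_antisymm
  · calc (C ⊔ A) ^ k ≤ C ^ k ⊔ A := sup_pow_le_pow_sup _ _ _
      _ = A := sup_eq_right.mpr (hAA' ▸ mul_le_left)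
  · calc A = A * (C ⊔ A ⊔ A') ^ k := by rw [hcop, top_pow, mul_top]
      _ ≤ A * ((C ⊔ A) ^ k ⊔ A') := mul_mono_right (sup_pow_le_pow_sup _ _ _)
      _ ≤ (C ⊔ A) ^ k := by
        rw [mul_sup, hAA']
        exact sup_le mul_le_right (pow_right_mono le_sup_left k)

end Ideal

variable {R : Type*} [CommRing R]

theorem span_pair_pow_eq_span_singleton {b b' c : R} {k : ℕ} (hbb' : b * b' = c ^ k)
    (hcop : IsCoprime c (b + b')) : Ideal.span {c, b} ^ k = Ideal.span {b} := by
  rw [Ideal.span_insert]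
  refine Ideal.sup_pow_eq_of_mul_eq_pow (A' := Ideal.span {b'}) ?_ ?_
  · rw [Ideal.span_singleton_mul_span_singleton, hbb', Ideal.span_singleton_pow]
  · rw [← Ideal.isCoprime_span_singleton_iff, Ideal.isCoprime_iff_sup_eq] at hcop
    rw [sup_assoc, eq_top_iff, ← hcop]
    refine sup_le_sup_left ?_ _
    rw [Ideal.span_singleton_le_iff_mem]
    exact Submodule.add_mem_sup (Ideal.mem_span_singleton_self b)
      (Ideal.mem_span_singleton_self b')

theorem prime_dvd_card_classGroup_of_pow_isPrincipal [IsDedekindDomain R]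
    [Fintype (ClassGroup R)] (p : ℕ) [Fact p.Prime] {J : Ideal R} (hJ : J ∈ (Ideal R)⁰)
    (hpow : (J ^ p).IsPrincipal) (hJ' : ¬J.IsPrincipal) : p ∣ Fintype.card (ClassGroup R) := by
  set g := ClassGroup.mk0 ⟨J, hJ⟩
  have hg : g ^ p = 1 := by
    rwa [← map_pow, ClassGroup.mk0_eq_one_iff]
  have hg' : g ≠ 1 := by
    rwa [Ne, ClassGroup.mk0_eq_one_iff]
  rw [← orderOf_eq_prime hg hg']
  exact orderOf_dvd_card

theorem not_isPrincipal_of_pow_eq_span_singleton [IsDomain R] {J : Ideal R} {b : R} {k : ℕ}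
    (hunits : ∀ ε : Rˣ, ∃ δ : Rˣ, δ ^ k = ε) (hb : ∀ γ : R, γ ^ k ≠ b)
    (hJ : J ^ k = Ideal.span {b}) : ¬J.IsPrincipal := by
  rintro ⟨γ, rfl⟩
  rw [Ideal.submodule_span_eq, Ideal.span_singleton_pow,
    Ideal.span_singleton_eq_span_singleton] at hJ
  obtain ⟨ε, hε⟩ := hJ
  obtain ⟨δ, rfl⟩ := hunits ε
  exact hb (γ * δ) (by rw [mul_pow, ← hε, Units.val_pow_eq_pow_val])

section RankTwo

variable {S : Type*} [CommRing S] [Algebra R S] [Module.Free R S] [Module.Finite R S]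

theorem Algebra.sq_sub_trace_mul_add_norm [Nontrivial R] (h2 : Module.finrank R S = 2) (x : S) :
    x ^ 2 - algebraMap R S (trace R S x) * x + algebraMap R S (norm R x) = 0 := by
  classical
  set B := Module.finBasisOfFinrankEq R S h2
  apply leftMulMatrix_injective B
  have := (leftMulMatrix B x).aeval_self_charpoly
  rw [Matrix.charpoly_fin_two, ← trace_eq_matrix_trace, ← norm_eq_matrix_det] at this
  simpa [Algebra.algebraMap_eq_smul_one] using this

theorem Algebra.trace_pow_three [Nontrivial R] (h2 : Module.finrank R S = 2) (x : S) :
    trace R S (x ^ 3) = trace R S x ^ 3 - 3 * trace R S x * norm R x := by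
  set t := trace R S x
  set N := norm R x
  have h3 : x ^ 3 = (t ^ 2 - N) • x - algebraMap R S (t * N) := by
    rw [Algebra.smul_def, map_sub, map_mul, map_pow]
    linear_combination (x + algebraMap R S t) * sq_sub_trace_mul_add_norm h2 x
  rw [h3, map_sub, map_smul, trace_algebraMap, h2, smul_eq_mul, nsmul_eq_mul]
  push_cast
  ring

end RankTwo

section QuadraticField

variable {K : Type*} [Field K] [CharZero K] {d : ℤ} {α : K}

theorem ne_ratCast_of_sq_eq (hd : ¬IsSquare (d : ℚ)) (hα : α ^ 2 = d) (q : ℚ) : α ≠ q := by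
  rintro rfl
  exact hd ⟨q, by exact_mod_cast hα.symm.trans (sq (q : K))⟩

theorem ratCast_add_mul_eq_zero_iff (hd : ¬IsSquare (d : ℚ)) (hα : α ^ 2 = d) {u v : ℚ} :
    (u : K) + v * α = 0 ↔ u = 0 ∧ v = 0 := by
  refine ⟨fun h ↦ ?_, fun ⟨hu, hv⟩ ↦ by simp [hu, hv]⟩
  obtain rfl : v = 0 := by
    by_contra hv
    refine ne_ratCast_of_sq_eq hd hα (-u / v) ?_
    push_cast
    field_simp
    linear_combination h
  simpa using h

theorem linearIndependent_one_of_sq_eq (hd : ¬IsSquare (d : ℚ)) (hα : α ^ 2 = d) :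
    LinearIndependent ℚ ![1, α] := by
  rw [LinearIndependent.pair_iff]
  intro s t hst
  rwa [Rat.smul_def, Rat.smul_def, mul_one, ratCast_add_mul_eq_zero_iff hd hα] at hst

theorem exists_eq_ratCast_add_mul (hK : Module.finrank ℚ K = 2) (hd : ¬IsSquare (d : ℚ))
    (hα : α ^ 2 = d) (y : K) : ∃ u v : ℚ, y = u + v * α := by
  have hspan := (linearIndependent_one_of_sq_eq hd hα).span_eq_top_of_card_eq_finrank
    (by simp [hK])
  rw [Matrix.range_cons, Matrix.range_cons, Matrix.range_empty, Set.union_empty,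
    Set.singleton_union] at hspan
  obtain ⟨u, v, h⟩ := Submodule.mem_span_pair.mp (hspan ▸ Submodule.mem_top (x := y))
  exact ⟨u, v, by rw [← h, Rat.smul_def, Rat.smul_def, mul_one]⟩

theorem exists_eq_ratCast_or_eq_mul_sq (hK : Module.finrank ℚ K = 2) (hd : ¬IsSquare (d : ℚ))
    (hα : α ^ 2 = d) {y : K} {r : ℚ} (hy : y ^ 2 = r) :
    (∃ q : ℚ, y = q) ∨ ∃ v : ℚ, r = d * v ^ 2 := by
  obtain ⟨u, v, rfl⟩ := exists_eq_ratCast_add_mul hK hd hα y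
  have h : ((u ^ 2 + d * v ^ 2 - r : ℚ) : K) + ((2 * u * v : ℚ) : K) * α = 0 := by
    push_cast
    linear_combination hy - v ^ 2 * hα
  obtain ⟨hr, huv⟩ := (ratCast_add_mul_eq_zero_iff hd hα).mp h
  rcases mul_eq_zero.mp huv with hu | rfl
  · obtain rfl := (mul_eq_zero.mp hu).resolve_left two_ne_zero
    exact .inr ⟨v, by linarith⟩
  · exact .inl ⟨u, by simp⟩

end QuadraticField

theorem Int.pow_three_sub_three_mul_sq_mul_ne {m : ℤ} (hm : m ≠ 1) (t : ℤ) :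
    t ^ 3 - 3 * m ^ 2 * t ≠ 2 - 2 * m ^ 3 := by
  intro h
  have key : (t - m) ^ 2 * (t - m + 3 * m) = 2 := by linear_combination h
  have hle : (t - m) ^ 2 ≤ 2 := Int.le_of_dvd two_pos ⟨_, key.symm⟩
  obtain hs | hs | hs : t - m = -1 ∨ t - m = 0 ∨ t - m = 1 := by
    have : -1 ≤ t - m ∧ t - m ≤ 1 := by constructor <;> nlinarith
    omega
  all_goals rw [hs] at key; omega

theorem one_sub_two_mul_pow_three_mul_sq_ne_neg_three (m : ℤ) (v : ℚ) :
    ((1 - 2 * m ^ 3 : ℤ) : ℚ) * v ^ 2 ≠ -3 := by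
  intro h
  -- `3(2m³ - 1) = ((2m³ - 1)v)²` would be an integer square, which it is not modulo 27.
  obtain ⟨w, hw⟩ : IsSquare (3 * (2 * m ^ 3 - 1)) := by
    rw [← Rat.isSquare_intCast_iff]
    refine ⟨(2 * m ^ 3 - 1) * v, ?_⟩
    push_cast at h ⊢
    linear_combination (2 * (m : ℚ) ^ 3 - 1) * h
  have hmod : ∀ x y : ZMod 27, x * x ≠ 3 * (2 * y ^ 3 - 1) := by decide
  exact hmod w m (by exact_mod_cast congrArg (fun z : ℤ ↦ (z : ZMod 27)) hw.symm)

theorem isCoprime_sq_two_mul_one_sub_pow_three {m : ℤ} (hm : Odd m) :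
    IsCoprime (m ^ 2) (2 * (1 - m ^ 3)) := by
  obtain ⟨k, rfl⟩ := hm
  exact IsCoprime.pow_left ⟨1 - 2 * k * (2 * k + 1) ^ 2, -k, by ring⟩

theorem span_pair_pow_three_eq_of_sq_eq {m : ℤ} (hm : Odd m) {a : R}
    (ha : a ^ 2 = ((1 - 2 * m ^ 3 : ℤ) : R)) :
    Ideal.span {((m ^ 2 : ℤ) : R), ((1 - m ^ 3 : ℤ) : R) + a} ^ 3 =
      Ideal.span {((1 - m ^ 3 : ℤ) : R) + a} := by
  refine span_pair_pow_eq_span_singleton (b' := ((1 - m ^ 3 : ℤ) : R) - a) ?_ ?_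
  · push_cast at ha ⊢
    linear_combination -ha
  · convert (isCoprime_sq_two_mul_one_sub_pow_three hm).intCast (R := R) using 1
    push_cast
    ring

section ImaginaryQuadratic

variable {K : Type*} [Field K] [NumberField K] {d : ℤ} {α : K}

theorem NumberField.RingOfIntegers.exists_eq_intCast_of_coe_eq_ratCast {x : 𝓞 K} {q : ℚ}
    (hx : (x : K) = q) : ∃ n : ℤ, x = n := by
  have hq : IsIntegral ℤ q := by
    rw [← isIntegral_algebraMap_iff (algebraMap ℚ K).injective, eq_ratCast, ← hx]
    exact x.isIntegral_coe
  obtain ⟨n, hn⟩ := IsIntegrallyClosed.isIntegral_iff.mp hq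
  refine ⟨n, RingOfIntegers.ext ?_⟩
  rw [hx, ← hn]
  simp

theorem exists_trace_sq_sub_four_mul_norm_eq (hK : Module.finrank ℚ K = 2) (hd : ¬IsSquare (d : ℚ))
    (hα : α ^ 2 = d) (x : 𝓞 K) :
    ∃ v : ℚ, ((Algebra.trace ℤ (𝓞 K) x ^ 2 - 4 * Algebra.norm ℤ x : ℤ) : ℚ) = d * v ^ 2 := by
  have h2 := (RingOfIntegers.rank K).trans hK
  set t := Algebra.trace ℤ (𝓞 K) x
  set N := Algebra.norm ℤ x
  -- `2x - t` squares to the discriminant; it is rational only for `x ∈ ℤ`, where that vanishes.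
  have hw : (2 * (x : K) - t) ^ 2 = ((t ^ 2 - 4 * N : ℤ) : ℚ) := by
    have := congrArg (algebraMap (𝓞 K) K) (Algebra.sq_sub_trace_mul_add_norm h2 x)
    simp only [algebraMap_int_eq, eq_intCast, map_add, map_sub, map_mul, map_pow,
      map_intCast, map_zero, ← RingOfIntegers.coe_eq_algebraMap] at this
    rw [Rat.cast_intCast]
    push_cast
    linear_combination 4 * this
  rcases exists_eq_ratCast_or_eq_mul_sq hK hd hα hw with ⟨q, hq⟩ | h
  · obtain ⟨n, rfl⟩ := RingOfIntegers.exists_eq_intCast_of_coe_eq_ratCast (x := x)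
      (q := (q + t) / 2) (by push_cast; linear_combination hq / 2)
    refine ⟨0, ?_⟩
    suffices t ^ 2 - 4 * N = 0 by simp [this]
    simp only [t, N, ← eq_intCast (algebraMap ℤ (𝓞 K)), Algebra.trace_algebraMap,
      Algebra.norm_algebraMap, h2, nsmul_eq_mul]
    ring
  · exact h

theorem trace_eq_zero_of_sq_eq (hK : Module.finrank ℚ K = 2) (hd : ¬IsSquare (d : ℚ))
    {a : 𝓞 K} (ha : (a : K) ^ 2 = d) : Algebra.trace ℤ (𝓞 K) a = 0 := by
  have hCH := congrArg (algebraMap (𝓞 K) K)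
    (Algebra.sq_sub_trace_mul_add_norm ((RingOfIntegers.rank K).trans hK) a)
  simp only [algebraMap_int_eq, eq_intCast, map_add, map_sub, map_mul, map_pow,
    map_intCast, map_zero, ← RingOfIntegers.coe_eq_algebraMap] at hCH
  by_contra ht
  refine ne_ratCast_of_sq_eq hd ha ((d + Algebra.norm ℤ a) / Algebra.trace ℤ (𝓞 K) a) ?_
  push_cast
  field_simp
  linear_combination -hCH + ha

theorem trace_norm_intCast_add (hK : Module.finrank ℚ K = 2) (hd : ¬IsSquare (d : ℚ))
    {a : 𝓞 K} (ha : (a : K) ^ 2 = d) (c : ℤ) :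
    Algebra.trace ℤ (𝓞 K) (c + a) = 2 * c ∧ Algebra.norm ℤ ((c : 𝓞 K) + a) = c ^ 2 - d := by
  have h2 := (RingOfIntegers.rank K).trans hK
  have htr : Algebra.trace ℤ (𝓞 K) (c + a) = 2 * c := by
    rw [map_add, trace_eq_zero_of_sq_eq hK hd ha, ← eq_intCast (algebraMap ℤ (𝓞 K)),
      Algebra.trace_algebraMap, h2, add_zero, nsmul_eq_mul, Nat.cast_ofNat]
  refine ⟨htr, ?_⟩
  have hCH := congrArg (algebraMap (𝓞 K) K) (Algebra.sq_sub_trace_mul_add_norm h2 (c + a))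
  rw [htr] at hCH
  simp only [algebraMap_int_eq, eq_intCast, map_add, map_sub, map_mul, map_pow,
    map_intCast, map_zero, ← RingOfIntegers.coe_eq_algebraMap] at hCH
  have hK' : ((Algebra.norm ℤ ((c : 𝓞 K) + a) : ℤ) : K) = c ^ 2 - d := by
    linear_combination hCH - ha
  exact_mod_cast hK'

theorem exists_unit_pow_three_eq (hK : Module.finrank ℚ K = 2) (hd : d < 0)
    (hd3 : ∀ v : ℚ, (d : ℚ) * v ^ 2 ≠ -3) (hα : α ^ 2 = d) (ε : (𝓞 K)ˣ) :
    ∃ δ : (𝓞 K)ˣ, δ ^ 3 = ε := by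
  have hsq : ¬IsSquare (d : ℚ) := fun h ↦ (Int.cast_lt_zero.mpr hd).not_ge h.nonneg
  obtain ⟨v, hv⟩ := exists_trace_sq_sub_four_mul_norm_eq hK hsq hα ε
  have hCH := Algebra.sq_sub_trace_mul_add_norm ((RingOfIntegers.rank K).trans hK) (ε : 𝓞 K)
  have hN := Int.isUnit_iff.mp (ε.isUnit.map (Algebra.norm ℤ))
  rw [algebraMap_int_eq, eq_intCast, eq_intCast] at hCH
  generalize Algebra.trace ℤ (𝓞 K) ε = t at hv hCH
  generalize Algebra.norm ℤ (ε : 𝓞 K) = N at hv hCH hN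
  have hdisc : t ^ 2 - 4 * N ≤ 0 := by
    have : (d : ℚ) * v ^ 2 ≤ 0 :=
      mul_nonpos_of_nonpos_of_nonneg (Int.cast_nonpos.mpr hd.le) (sq_nonneg v)
    exact_mod_cast hv ▸ this
  have hdisc3 : t ^ 2 - 4 * N ≠ -3 := fun h ↦ hd3 v (by rw [← hv, h]; norm_num)
  obtain rfl : N = 1 := hN.resolve_right (by rintro rfl; nlinarith)
  have h4 : ε ^ 4 = 1 := by
    refine Units.ext ?_
    push_cast
    obtain ⟨hl, hu⟩ : -2 ≤ t ∧ t ≤ 2 := by constructor <;> nlinarith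
    interval_cases t
    · have h : (ε : 𝓞 K) + 1 = 0 := pow_eq_zero_iff two_ne_zero |>.mp (by linear_combination hCH)
      linear_combination ((ε : 𝓞 K) ^ 3 - ε ^ 2 + ε - 1) * h
    · omega
    · linear_combination ((ε : 𝓞 K) ^ 2 - 1) * hCH
    · omega
    · have h : (ε : 𝓞 K) - 1 = 0 := pow_eq_zero_iff two_ne_zero |>.mp (by linear_combination hCH)
      linear_combination ((ε : 𝓞 K) ^ 3 + ε ^ 2 + ε + 1) * h
  exact ⟨ε⁻¹, by rw [← mul_one (ε⁻¹ ^ 3), ← h4]; group⟩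

theorem pow_three_ne_intCast_add (hK : Module.finrank ℚ K = 2) {m : ℤ} (hm : m ≠ 1)
    (hd : ¬IsSquare ((1 - 2 * m ^ 3 : ℤ) : ℚ)) {a : 𝓞 K}
    (ha : (a : K) ^ 2 = ((1 - 2 * m ^ 3 : ℤ) : K)) (γ : 𝓞 K) :
    γ ^ 3 ≠ ((1 - m ^ 3 : ℤ) : 𝓞 K) + a := by
  intro h
  obtain ⟨htr, hnorm⟩ := trace_norm_intCast_add hK hd ha (1 - m ^ 3)
  have hN : Algebra.norm ℤ γ = m ^ 2 := by
    refine (Odd.pow_inj (n := 3) (by decide)).mp ?_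
    rw [← map_pow, h, hnorm]
    ring
  have htr3 := Algebra.trace_pow_three ((RingOfIntegers.rank K).trans hK) γ
  rw [h, htr, hN] at htr3
  exact Int.pow_three_sub_three_mul_sq_mul_ne hm (Algebra.trace ℤ (𝓞 K) γ)
    (by linear_combination -htr3)

end ImaginaryQuadratic

/-- For any odd integer `m > 1`, the class number of the imaginary quadratic field
`ℚ(√(1 - 2m³))` is divisible by `3`. The field `ℚ(√(1 - 2m³))` is encoded as an
arbitrary number field `K` of degree `2` over `ℚ` containing a square root of `1 - 2m³`
(since `1 - 2m³ < 0` is not a perfect square, such a `K` is exactly `ℚ(√(1 - 2m³))`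
up to isomorphism). -/
theorem class_number_dvd_three (m : ℤ) (hm : 1 < m) (hmodd : Odd m)
    (K : Type) [Field K] [NumberField K] (hrank : Module.finrank ℚ K = 2)
    (α : K) (hα : α ^ 2 = ((1 - 2 * m ^ 3 : ℤ) : K)) :
    3 ∣ NumberField.classNumber K := by
  have hd : 1 - 2 * m ^ 3 < 0 := by linarith [one_lt_pow₀ hm (n := 3) (by norm_num)]
  have hsq : ¬IsSquare ((1 - 2 * m ^ 3 : ℤ) : ℚ) :=
    fun h ↦ (Int.cast_lt_zero.mpr hd).not_ge h.nonneg
  let a : 𝓞 K := ⟨α, IsIntegral.of_pow two_pos (hα ▸ isIntegral_algebraMap)⟩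
  have ha : (a : K) ^ 2 = ((1 - 2 * m ^ 3 : ℤ) : K) := hα
  have hJ := span_pair_pow_three_eq_of_sq_eq hmodd (a := a)
    (RingOfIntegers.ext (by simpa [RingOfIntegers.coe_eq_algebraMap, map_ofNat] using ha))
  refine prime_dvd_card_classGroup_of_pow_isPrincipal 3 ?_ (hJ ▸ ⟨⟨_, rfl⟩⟩)
    (not_isPrincipal_of_pow_eq_span_singleton
      (exists_unit_pow_three_eq hrank hd (one_sub_two_mul_pow_three_mul_sq_ne_neg_three m) hα)
      (pow_three_ne_intCast_add hrank hm.ne' hsq ha) hJ)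
  refine mem_nonZeroDivisors_of_ne_zero fun h ↦ ?_
  have hm0 := Ideal.span_eq_bot.mp h _ (Set.mem_insert _ _)
  rw [Int.cast_eq_zero] at hm0
  exact (pow_pos (by omega) 2).ne' hm0
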